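/- Let W(r) = 1/r² − K₁(r)/r. Then W'(r) = −2/r³ − K₁'(r)/r + K₁(r)/r², and there exist constants such that |W'(r)| ≲ 1/r as r → 0⁺ and |W'(r)| ≲ 1/r³ as r → +∞. -/

import Mathlib

noncomputable section

open Filter Asymptotics

def besselK1 (r : ℝ) : ℝ :=
  ∫ t in Set.Ioi (0:ℝ), Real.exp (-r * Real.cosh t) * Real.cosh t

def Wfun (r : ℝ) : ℝ := 1 / r^2 - besselK1 r / r

/-!
Write `Iₙ(r) = ∫₀^∞ e^{-r cosh t} coshⁿ t dt`, so that `K₁ = I₁` and `Iₙ' = -Iₙ₊₁`.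
Integrating `d/dt (sinh t · e^{-r cosh t}) = e^{-r cosh t} (cosh t - r sinh² t)` over `(0, ∞)`
gives `K₁(r) = r (I₂ - I₀)(r)`, hence `W = 1/r² - I₂ + I₀` and `W' = I₃ - I₁ - 2/r³` on `(0, ∞)`.
The substitution `s = sinh t` turns `I₃ - I₁` into `∫₀^∞ s² e^{-r√(1+s²)} ds`, which lies between
`2/r³ - 1/(2r)` and `2/r³ = ∫₀^∞ s² e^{-rs} ds` because `0 ≤ √(1+s²) - s ≤ 1/(2s)`.
-/

open MeasureTheory Real Set Topology

theorem Real.self_le_cosh (t : ℝ) : t ≤ cosh t := by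
  rcases le_or_gt 0 t with ht | ht
  · exact (self_le_sinh_iff.2 ht).trans (sinh_lt_cosh t).le
  · exact ht.le.trans (cosh_pos t).le

theorem Real.abs_sinh_le_cosh (t : ℝ) : |sinh t| ≤ cosh t := by
  have := sinh_lt_cosh (-t)
  rw [sinh_neg, cosh_neg] at this
  exact abs_le.2 ⟨by linarith, (sinh_lt_cosh t).le⟩

section ExpDecay

variable {r : ℝ}

theorem integral_pow_mul_exp_neg_mul_Ioi (n : ℕ) (hr : 0 < r) :
    ∫ s in Ioi (0 : ℝ), s ^ n * exp (-r * s) = n.factorial / r ^ (n + 1) := by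
  have h := integral_rpow_mul_exp_neg_mul_Ioi (a := n + 1) (by positivity) hr
  rw [Gamma_nat_eq_factorial, add_sub_cancel_right, ← Nat.cast_succ, rpow_natCast,
    div_pow, one_pow, ← mul_div_right_comm, one_mul] at h
  rw [← h]
  refine setIntegral_congr_fun measurableSet_Ioi fun s _ => ?_
  simp [rpow_natCast]

theorem integrableOn_pow_mul_exp_neg_mul_Ioi (n : ℕ) (hr : 0 < r) :
    IntegrableOn (fun s => s ^ n * exp (-r * s)) (Ioi 0) :=
  Integrable.of_integral_ne_zero <| by
    rw [integral_pow_mul_exp_neg_mul_Ioi n hr]; positivity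

theorem integral_mul_exp_neg_mul_Ioi (hr : 0 < r) :
    ∫ s in Ioi (0 : ℝ), s * exp (-r * s) = 1 / r ^ 2 := by
  simpa using integral_pow_mul_exp_neg_mul_Ioi 1 hr

theorem integral_sq_mul_exp_neg_mul_Ioi (hr : 0 < r) :
    ∫ s in Ioi (0 : ℝ), s ^ 2 * exp (-r * s) = 2 / r ^ 3 := by
  rw [integral_pow_mul_exp_neg_mul_Ioi 2 hr]
  norm_num [Nat.factorial]

end ExpDecay

theorem integral_cosh_smul_comp_sinh_Ioi {E : Type*} [NormedAddCommGroup E] [NormedSpace ℝ E]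
    (f : ℝ → E) : ∫ t in Ioi 0, cosh t • f (sinh t) = ∫ s in Ioi 0, f s := by
  have himage : sinh '' Ioi 0 = Ioi 0 := by
    ext s
    refine ⟨?_, fun hs => ⟨arsinh s, arsinh_pos_iff.2 hs, sinh_arsinh s⟩⟩
    rintro ⟨t, ht, rfl⟩
    exact sinh_pos_iff.2 ht
  conv_rhs => rw [← himage]
  rw [integral_image_eq_integral_abs_deriv_smul measurableSet_Ioi
    (fun t _ => (hasDerivAt_sinh t).hasDerivWithinAt) sinh_injective.injOn]
  simp only [abs_of_pos (cosh_pos _)]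

def coshMoment (n : ℕ) (r : ℝ) : ℝ :=
  ∫ t in Ioi (0 : ℝ), exp (-r * cosh t) * cosh t ^ n

theorem coshMoment_one : coshMoment 1 = besselK1 := by
  ext r; simp [coshMoment, besselK1]

section CoshMoment

variable {r : ℝ}

theorem isBigO_exp_neg_mul_mul_pow (hr : 0 < r) (n : ℕ) :
    (fun x => exp (-r * x) * x ^ n) =O[atTop] fun x => exp (-(r / 2) * x) := by
  have h := (isBigO_refl (fun x => exp (-r * x)) atTop).mul_isLittleO
    (isLittleO_pow_exp_pos_mul_atTop n (half_pos hr))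
  refine h.isBigO.congr_right fun x => ?_
  rw [← exp_add]; ring_nf

theorem isBigO_exp_neg_mul_cosh_mul_cosh_pow (hr : 0 < r) (n : ℕ) :
    (fun t => exp (-r * cosh t) * cosh t ^ n) =O[atTop] fun t => exp (-(r / 2) * t) := by
  have hcosh : Tendsto cosh atTop atTop := tendsto_atTop_mono self_le_cosh tendsto_id
  refine ((isBigO_exp_neg_mul_mul_pow hr n).comp_tendsto hcosh).trans <|
    IsBigO.of_bound 1 (Eventually.of_forall fun t => ?_)
  simp only [Function.comp, norm_eq_abs, abs_exp, one_mul]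
  exact exp_le_exp.2 (by nlinarith [self_le_cosh t])

theorem integrableOn_exp_neg_mul_cosh_mul_cosh_pow (hr : 0 < r) (n : ℕ) :
    IntegrableOn (fun t => exp (-r * cosh t) * cosh t ^ n) (Ioi 0) :=
  integrable_of_isBigO_exp_neg (half_pos hr) (by fun_prop)
    (isBigO_exp_neg_mul_cosh_mul_cosh_pow hr n)

theorem tendsto_exp_neg_mul_cosh_mul_cosh_pow (hr : 0 < r) (n : ℕ) :
    Tendsto (fun t => exp (-r * cosh t) * cosh t ^ n) atTop (𝓝 0) := by
  refine (isBigO_exp_neg_mul_cosh_mul_cosh_pow hr n).trans_tendsto ?_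
  exact tendsto_exp_atBot.comp (tendsto_id.const_mul_atTop_of_neg (by linarith))

theorem hasDerivAt_coshMoment (n : ℕ) (hr : 0 < r) :
    HasDerivAt (coshMoment n) (-coshMoment (n + 1) r) r := by
  have hball : ∀ x ∈ Metric.ball r (r / 2), r / 2 ≤ x := fun x hx => by
    linarith [(abs_lt.1 (Real.dist_eq x r ▸ Metric.mem_ball.1 hx)).1]
  have key := hasDerivAt_integral_of_dominated_loc_of_deriv_le
    (μ := volume.restrict (Ioi 0)) (x₀ := r) (s := Metric.ball r (r / 2))
    (F := fun x t => exp (-x * cosh t) * cosh t ^ n)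
    (F' := fun x t => -(exp (-x * cosh t) * cosh t ^ (n + 1)))
    (bound := fun t => exp (-(r / 2) * cosh t) * cosh t ^ (n + 1))
    (Metric.ball_mem_nhds r (half_pos hr))
    (Eventually.of_forall fun x => (Continuous.aestronglyMeasurable (by fun_prop)).restrict)
    (integrableOn_exp_neg_mul_cosh_mul_cosh_pow hr n)
    (Continuous.aestronglyMeasurable (by fun_prop)).restrict
    (Eventually.of_forall fun t x hx => ?_)
    (integrableOn_exp_neg_mul_cosh_mul_cosh_pow (half_pos hr) (n + 1))
    (Eventually.of_forall fun t x _ => ?_)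
  · unfold coshMoment
    rw [← integral_neg]
    exact key.2
  · rw [norm_neg, norm_eq_abs, abs_of_pos (by positivity)]
    gcongr
    nlinarith [hball x hx]
  · have hlin : HasDerivAt (fun x => -x * cosh t) (-cosh t) x := by
      simpa using (hasDerivAt_neg x).mul_const (cosh t)
    exact (hlin.exp.mul_const (cosh t ^ n)).congr_deriv (by ring)

theorem coshMoment_one_eq (hr : 0 < r) :
    coshMoment 1 r = r * (coshMoment 2 r - coshMoment 0 r) := by
  set m : ℕ → ℝ → ℝ := fun n t => exp (-r * cosh t) * cosh t ^ n
  have hint (n : ℕ) : IntegrableOn (m n) (Ioi 0) := integrableOn_exp_neg_mul_cosh_mul_cosh_pow hr n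
  have hderiv (t : ℝ) :
      HasDerivAt (fun t => sinh t * exp (-r * cosh t)) (m 1 t - r * (m 2 t - m 0 t)) t := by
    refine ((hasDerivAt_sinh t).mul ((hasDerivAt_cosh t).const_mul (-r)).exp).congr_deriv ?_
    simp only [m, cosh_sq t]
    ring
  have hlim : Tendsto (fun t => sinh t * exp (-r * cosh t)) atTop (𝓝 0) := by
    refine squeeze_zero_norm (fun t => ?_) (tendsto_exp_neg_mul_cosh_mul_cosh_pow hr 1)
    rw [norm_mul, norm_eq_abs, norm_eq_abs, abs_exp, pow_one, mul_comm]
    exact mul_le_mul_of_nonneg_left (abs_sinh_le_cosh t) (exp_pos _).le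
  have hsub : IntegrableOn (fun t => r * (m 2 t - m 0 t)) (Ioi 0) :=
    ((hint 2).sub (hint 0)).const_mul r
  have hFTC := integral_Ioi_of_hasDerivAt_of_tendsto
    (Continuous.continuousWithinAt (by fun_prop)) (fun t _ => hderiv t)
    ((hint 1).sub hsub) hlim
  rw [integral_sub (hint 1) hsub, integral_const_mul,
    integral_sub (hint 2) (hint 0), sinh_zero, zero_mul, sub_zero] at hFTC
  unfold coshMoment
  linarith

end CoshMoment

section SqrtIntegral

variable {r : ℝ}

theorem coshMoment_three_sub_one (hr : 0 < r) :
    coshMoment 3 r - coshMoment 1 r = ∫ s in Ioi 0, s ^ 2 * exp (-r * √(1 + s ^ 2)) := by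
  rw [coshMoment, coshMoment, ← integral_sub (integrableOn_exp_neg_mul_cosh_mul_cosh_pow hr 3)
    (integrableOn_exp_neg_mul_cosh_mul_cosh_pow hr 1)]
  conv_rhs => rw [← integral_cosh_smul_comp_sinh_Ioi]
  congr 1
  ext t
  rw [add_comm, ← cosh_sq, sqrt_sq (cosh_pos t).le, smul_eq_mul]
  linear_combination exp (-r * cosh t) * cosh t * cosh_sq t

theorem sq_mul_exp_neg_mul_sqrt_le (hr : 0 ≤ r) (s : ℝ) :
    s ^ 2 * exp (-r * √(1 + s ^ 2)) ≤ s ^ 2 * exp (-r * s) := by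
  have hsqrt : s ≤ √(1 + s ^ 2) := le_sqrt_of_sq_le (by linarith)
  exact mul_le_mul_of_nonneg_left
    (exp_le_exp.2 (mul_le_mul_of_nonpos_left hsqrt (neg_nonpos.2 hr))) (sq_nonneg s)

theorem sq_mul_exp_neg_mul_sub_sqrt_le (hr : 0 ≤ r) {s : ℝ} (hs : 0 < s) :
    s ^ 2 * exp (-r * s) - s ^ 2 * exp (-r * √(1 + s ^ 2)) ≤ r / 2 * (s * exp (-r * s)) := by
  have hgap : √(1 + s ^ 2) - s ≤ 1 / (2 * s) := by
    rw [sub_le_iff_le_add, sqrt_le_iff]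
    refine ⟨by positivity, ?_⟩
    have : (1 / (2 * s) + s) ^ 2 = 1 + s ^ 2 + 1 / (4 * s ^ 2) := by field_simp; ring
    rw [this]
    linarith [show 0 < 1 / (4 * s ^ 2) by positivity]
  have hexp : exp (-r * s) * (1 - r * (√(1 + s ^ 2) - s)) ≤ exp (-r * √(1 + s ^ 2)) := by
    have := add_one_le_exp (-(r * (√(1 + s ^ 2) - s)))
    rw [show -r * √(1 + s ^ 2) = -r * s + -(r * (√(1 + s ^ 2) - s)) by ring, exp_add]
    gcongr
    linarith
  calc s ^ 2 * exp (-r * s) - s ^ 2 * exp (-r * √(1 + s ^ 2))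
      ≤ s ^ 2 * exp (-r * s) * (r * (√(1 + s ^ 2) - s)) := by nlinarith [sq_nonneg s]
    _ ≤ s ^ 2 * exp (-r * s) * (r * (1 / (2 * s))) := by gcongr
    _ = r / 2 * (s * exp (-r * s)) := by field_simp

theorem integrableOn_sq_mul_exp_neg_mul_sqrt (hr : 0 < r) :
    IntegrableOn (fun s => s ^ 2 * exp (-r * √(1 + s ^ 2))) (Ioi 0) := by
  refine (integrableOn_pow_mul_exp_neg_mul_Ioi 2 hr).mono'
    (Continuous.aestronglyMeasurable (by fun_prop)) ?_
  refine Eventually.of_forall fun s => ?_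
  rw [norm_of_nonneg (by positivity)]
  exact sq_mul_exp_neg_mul_sqrt_le hr.le s

theorem integral_sq_mul_exp_neg_mul_sqrt_nonneg :
    0 ≤ ∫ s in Ioi 0, s ^ 2 * exp (-r * √(1 + s ^ 2)) :=
  setIntegral_nonneg measurableSet_Ioi fun s _ => by positivity

theorem integral_sq_mul_exp_neg_mul_sqrt_le (hr : 0 < r) :
    ∫ s in Ioi 0, s ^ 2 * exp (-r * √(1 + s ^ 2)) ≤ 2 / r ^ 3 := by
  rw [← integral_sq_mul_exp_neg_mul_Ioi hr]
  exact setIntegral_mono_on (integrableOn_sq_mul_exp_neg_mul_sqrt hr)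
    (integrableOn_pow_mul_exp_neg_mul_Ioi 2 hr) measurableSet_Ioi
    fun s _ => sq_mul_exp_neg_mul_sqrt_le hr.le s

theorem two_div_pow_three_sub_integral_sq_mul_exp_neg_mul_sqrt_le (hr : 0 < r) :
    2 / r ^ 3 - ∫ s in Ioi 0, s ^ 2 * exp (-r * √(1 + s ^ 2)) ≤ 1 / (2 * r) := by
  have hint1 := integrableOn_pow_mul_exp_neg_mul_Ioi 1 hr
  simp only [pow_one] at hint1
  calc 2 / r ^ 3 - ∫ s in Ioi 0, s ^ 2 * exp (-r * √(1 + s ^ 2))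
      = ∫ s in Ioi 0, (s ^ 2 * exp (-r * s) - s ^ 2 * exp (-r * √(1 + s ^ 2))) := by
        rw [integral_sub (integrableOn_pow_mul_exp_neg_mul_Ioi 2 hr)
          (integrableOn_sq_mul_exp_neg_mul_sqrt hr), integral_sq_mul_exp_neg_mul_Ioi hr]
    _ ≤ ∫ s in Ioi 0, r / 2 * (s * exp (-r * s)) :=
        setIntegral_mono_on ((integrableOn_pow_mul_exp_neg_mul_Ioi 2 hr).sub
          (integrableOn_sq_mul_exp_neg_mul_sqrt hr)) (hint1.const_mul _) measurableSet_Ioi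
          fun s hs => sq_mul_exp_neg_mul_sub_sqrt_le hr.le hs
    _ = 1 / (2 * r) := by
        rw [integral_const_mul, integral_mul_exp_neg_mul_Ioi hr]
        field_simp

end SqrtIntegral

section Wfun

variable {r : ℝ}

theorem differentiableAt_besselK1 (hr : 0 < r) : DifferentiableAt ℝ besselK1 r :=
  coshMoment_one ▸ (hasDerivAt_coshMoment 1 hr).differentiableAt

theorem hasDerivAt_one_div_sq (hr : r ≠ 0) : HasDerivAt (fun x => 1 / x ^ 2) (-2 / r ^ 3) r := by
  simp only [one_div]
  refine ((hasDerivAt_pow 2 r).fun_inv (pow_ne_zero 2 hr)).congr_deriv ?_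
  field_simp
  ring

theorem hasDerivAt_Wfun_of_hasDerivAt {k : ℝ} (hk : HasDerivAt besselK1 k r) (hr : r ≠ 0) :
    HasDerivAt Wfun (-2 / r ^ 3 - k / r + besselK1 r / r ^ 2) r := by
  refine ((hasDerivAt_one_div_sq hr).sub (hk.div (hasDerivAt_id r) hr)).congr_deriv ?_
  simp only [id]
  field_simp
  ring

theorem hasDerivAt_Wfun (hr : 0 < r) :
    HasDerivAt Wfun (coshMoment 3 r - coshMoment 1 r - 2 / r ^ 3) r := by
  have hW : (fun x => 1 / x ^ 2 - (coshMoment 2 x - coshMoment 0 x)) =ᶠ[𝓝 r] Wfun := by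
    filter_upwards [lt_mem_nhds hr] with x hx
    rw [Wfun, ← coshMoment_one, coshMoment_one_eq hx, mul_div_cancel_left₀ _ hx.ne']
  refine (((hasDerivAt_one_div_sq hr.ne').sub ((hasDerivAt_coshMoment 2 hr).sub
    (hasDerivAt_coshMoment 0 hr))).congr_of_eventuallyEq hW.symm).congr_deriv ?_
  ring

theorem deriv_Wfun_eq (hr : 0 < r) :
    deriv Wfun r = (∫ s in Ioi 0, s ^ 2 * exp (-r * √(1 + s ^ 2))) - 2 / r ^ 3 := by
  rw [(hasDerivAt_Wfun hr).deriv, coshMoment_three_sub_one hr]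

theorem abs_deriv_Wfun_le_two_div_pow_three (hr : 0 < r) : |deriv Wfun r| ≤ 2 / r ^ 3 := by
  rw [deriv_Wfun_eq hr, abs_le]
  constructor <;> linarith [integral_sq_mul_exp_neg_mul_sqrt_le hr,
    integral_sq_mul_exp_neg_mul_sqrt_nonneg (r := r)]

theorem abs_deriv_Wfun_le_inv_two_mul (hr : 0 < r) : |deriv Wfun r| ≤ 1 / (2 * r) := by
  rw [deriv_Wfun_eq hr, abs_le]
  have : 0 < 1 / (2 * r) := by positivity
  constructor <;> linarith [integral_sq_mul_exp_neg_mul_sqrt_le hr,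
    two_div_pow_three_sub_integral_sq_mul_exp_neg_mul_sqrt_le hr]

end Wfun

theorem W_deriv_formula_and_bounds :
    (∀ r : ℝ, 0 < r →
        deriv Wfun r = -2/r^3 - deriv besselK1 r / r + besselK1 r / r^2) ∧
    (deriv Wfun) =O[nhdsWithin 0 (Set.Ioi 0)] (fun r : ℝ => 1/r) ∧
    (deriv Wfun) =O[atTop] (fun r : ℝ => 1/r^3) := by
  refine ⟨fun r hr => ?_, ?_, ?_⟩
  · exact (hasDerivAt_Wfun_of_hasDerivAt (differentiableAt_besselK1 hr).hasDerivAt hr.ne').deriv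
  · refine IsBigO.of_bound (1 / 2) ?_
    filter_upwards [self_mem_nhdsWithin] with r (hr : 0 < r)
    rw [norm_eq_abs, norm_of_nonneg (by positivity)]
    calc |deriv Wfun r| ≤ 1 / (2 * r) := abs_deriv_Wfun_le_inv_two_mul hr
      _ = 1 / 2 * (1 / r) := by ring
  · refine IsBigO.of_bound 2 ?_
    filter_upwards [eventually_gt_atTop 0] with r hr
    rw [norm_eq_abs, norm_of_nonneg (by positivity)]
    calc |deriv Wfun r| ≤ 2 / r ^ 3 := abs_deriv_Wfun_le_two_div_pow_three hr
      _ = 2 * (1 / r ^ 3) := by ring
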